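/- arXiv:2007.00167 — 2 statements merged into one kernel-verified Lean document; each statement's English description precedes it below -/
import Mathlib

section
/- For every type T equipped with a distinguished element t : T and an equivalence e : T ≃ T, there exists a unique map f : ℤ → T such that f 0 = t and f (z + 1) = e (f z) for every integer z. -/
/-! The map is `z ↦ eᶻ t`. Two solutions agreeing at `0` agree everywhere: upwards by the
recursion, downwards by cancelling the injective `e`. -/

open Function

theorem Int.funext_of_injective_step {α : Type*} {e : α → α} (he : Injective e) {f g : ℤ → α}
    (h0 : f 0 = g 0) (hf : ∀ z, f (z + 1) = e (f z)) (hg : ∀ z, g (z + 1) = e (g z)) :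
    f = g := by
  funext z
  induction z using Int.induction_on with
  | zero => exact h0
  | succ n ih => rw [hf, hg, ih]
  | pred n ih => exact he (by rw [← hf, ← hg, sub_add_cancel, ih])

theorem Equiv.Perm.zpow_add_one_apply {α : Type*} (e : Equiv.Perm α) (z : ℤ) (x : α) :
    (e ^ (z + 1)) x = e ((e ^ z) x) := by
  rw [← mul_self_zpow, Equiv.Perm.mul_apply]

/-- Set-level content of `ℤisInitial`: the integers, with point `0` and
self-equivalence the successor, form the initial ℤ-algebra: for every type `T`
with a point `t` and a self-equivalence `e`, there is a unique map `f : ℤ → T`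
with `f 0 = t` commuting with the successor and `e`. -/
theorem intIsInitial {T : Type*} (t : T) (e : T ≃ T) :
    ∃! f : ℤ → T, f 0 = t ∧ ∀ z : ℤ, f (z + 1) = e (f z) := by
  set f : ℤ → T := fun z => ((e : Equiv.Perm T) ^ z) t
  have hf : ∀ z, f (z + 1) = e (f z) := fun z => Equiv.Perm.zpow_add_one_apply e z t
  refine ⟨f, ⟨by simp [f], hf⟩, ?_⟩
  rintro g ⟨hg0, hg⟩
  exact Int.funext_of_injective_step e.injective (by simp [f, hg0]) hg hf
end

section
/- The fundamental group of the circle based at the point 1 is isomorphic (as a group) to the additive group of integers ℤ. -/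
/-!
`Circle.exp : ℝ → Circle` is the quotient of `ℝ` by the translation action of `2πℤ`, and it is a
covering map. Since `ℝ` is simply connected, monodromy on the fibre over `1` identifies the
fundamental group with the deck group `2πℤ` (a priori with its opposite, which is harmless as the
group is abelian), and `2πℤ ≅ ℤ`.
-/

noncomputable def AddSubgroup.zmultiplesEquivInt {A : Type*} [AddCommGroup A] [IsAddTorsionFree A]
    {a : A} (ha : a ≠ 0) : zmultiples a ≃+ ℤ :=
  ((AddMonoidHom.ofInjective (f := zmultiplesHom A a) (smul_left_injective ℤ ha)).trans
    (AddEquiv.addSubgroupCongr (range_zmultiplesHom a))).symm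

/-- The fundamental group of the circle (the unit circle in `ℂ`) based at `1`
is isomorphic to the additive group of integers. -/
theorem fundamentalGroup_circle_iso_int :
    Nonempty (FundamentalGroup Circle 1 ≃* Multiplicative ℤ) := by
  let basepointLift : Circle.exp ⁻¹' {1} := ⟨0, Circle.exp_zero⟩
  exact ⟨(Circle.isAddQuotientCoveringMap_exp.fundamentalGroupEquiv basepointLift).trans <|
    MulOpposite.opMulEquiv.symm.trans <| AddEquiv.toMultiplicative <|
      AddSubgroup.zmultiplesEquivInt Real.two_pi_pos.ne'⟩
end
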